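/- arXiv:2601.03828 — 2 statements merged into one kernel-verified Lean document; each statement's English description precedes it below -/
import Mathlib

section
/- The mould dupal, defined by dupal^m(x_1,...,x_m) = (B_m/m!) · (1/(x_1···x_m)) · Σ_{k=0}^{m-1} (−1)^k C(m−1,k) x_{k+1} for m ≥ 1 (where B_m are Bernoulli numbers), is alternal: for all p,q ≥ 1, the sum of dupal^{p+q} over all shuffles of (x_1,...,x_p) with (x_{p+1},...,x_{p+q}) is zero. -/
open scoped BigOperators

/-- All shuffle interleavings of two lists, preserving the relative order of each. -/
def shuffles {α : Type*} : List α → List α → List (List α)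
  | [], ys => [ys]
  | xs, [] => [xs]
  | x :: xs, y :: ys =>
      ((shuffles xs (y :: ys)).map (x :: ·)) ++ ((shuffles (x :: xs) ys).map (y :: ·))
termination_by xs ys => xs.length + ys.length
decreasing_by all_goals (simp; try omega)

variable {K : Type*} [Field K]

/-- The shuffle sum of a mould `M` over all interleavings of `a` and `b`. -/
def shSum (M : List K → K) (a b : List K) : K := ((shuffles a b).map M).sum

/-- The mould (concatenation-deconcatenation) product. -/
def mmul (M N : List K → K) (w : List K) : K :=
  ∑ k ∈ Finset.range (w.length + 1), M (w.take k) * N (w.drop k)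

/-- The unit mould: `1` in length `0` and `0` otherwise. -/
def one : List K → K := fun l => match l with | [] => 1 | _ => 0

/-- The mould `dupal`:
`dupal^m(x_1,…,x_m) = (B_m/m!) · (1/(x_1⋯x_m)) · Σ_{k=0}^{m-1} (−1)^k C(m−1,k) x_{k+1}`. -/
noncomputable def dupal {K : Type*} [Field K] (l : List K) : K :=
  ((bernoulli l.length / (Nat.factorial l.length : ℚ) : ℚ) : K) * (l.prod)⁻¹ *
    ∑ k ∈ Finset.range l.length, (-1 : K) ^ k * ((l.length - 1).choose k : K) * l.getD k 0

/-!
Let `a`, `b` have lengths `p`, `q` and put `m = p + q`. On every shuffle `σ` of `a` and `b`,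
`dupal σ` is the common factor `B_m / (m! x₁⋯x_m)` times the linear form
`ℓ(σ) = Σ_k (-1)^k C(m-1,k) σ_k`, so it suffices that `ℓ` is alternal. In the sum of the `k`-th
letters of all shuffles, the `i`-th letter of `a` occurs `C(k,i) C(m-1-k,p-1-i)` times, and by
trinomial revision
`Σ_k (-1)^k C(m-1,k) C(k,i) C(m-1-k,p-1-i) = (-1)^i C(m-1,i) C(m-1-i,p-1-i) Σ_j (-1)^j C(q,j)`,
which vanishes because `q ≥ 1`.
-/

open Finset

theorem Nat.choose_mul_choose_sub_comm (n j s : ℕ) :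
    n.choose j * (n - j).choose s = n.choose s * (n - s).choose j := by
  have h₁ := Nat.choose_mul (n := n) (k := j + s) (s := j) (Nat.le_add_right j s)
  have h₂ := Nat.choose_mul (n := n) (k := j + s) (s := s) (Nat.le_add_left s j)
  rw [Nat.add_sub_cancel_left] at h₁
  rw [Nat.add_sub_cancel] at h₂
  rw [← h₁, ← h₂, Nat.choose_symm_add]

theorem Int.alternating_sum_range_choose_of_lt {n N : ℕ} (hn : n ≠ 0) (hN : n < N) :
    ∑ j ∈ Finset.range N, ((-1) ^ j * n.choose j : ℤ) = 0 := by
  obtain ⟨n, rfl⟩ : ∃ n', n = n' + 1 := ⟨n - 1, by omega⟩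
  obtain ⟨N, rfl⟩ : ∃ N', N = N' + 1 := ⟨N - 1, by omega⟩
  rw [Int.alternating_sum_range_choose_eq_choose,
    Nat.choose_eq_zero_of_lt (by omega), Nat.cast_zero, mul_zero]

theorem List.sum_map_finset_sum {β ι M : Type*} [AddCommMonoid M] (l : List β) (s : Finset ι)
    (f : ι → β → M) : (l.map fun x => ∑ i ∈ s, f i x).sum = ∑ i ∈ s, (l.map (f i)).sum := by
  induction l with
  | nil => simp
  | cons x l ih => simp [ih, sum_add_distrib]

section Shuffles

variable {α : Type*}

theorem shuffles_nil_right (xs : List α) : shuffles xs [] = [xs] := by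
  cases xs <;> simp [shuffles]

theorem perm_append_of_mem_shuffles {a b σ : List α} (h : σ ∈ shuffles a b) :
    σ.Perm (a ++ b) := by
  induction a, b using shuffles.induct generalizing σ with
  | case1 ys => simp_all [shuffles]
  | case2 xs _ => simp_all [shuffles_nil_right]
  | case3 x xs y ys ih₁ ih₂ =>
    rw [shuffles, List.mem_append, List.mem_map, List.mem_map] at h
    rcases h with ⟨τ, hτ, rfl⟩ | ⟨τ, hτ, rfl⟩
    · exact (ih₁ hτ).cons x
    · exact ((ih₂ hτ).cons y).trans List.perm_middle.symm

theorem length_shuffles (a b : List α) :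
    (shuffles a b).length = (a.length + b.length).choose a.length := by
  induction a, b using shuffles.induct with
  | case1 ys => simp [shuffles]
  | case2 xs _ => simp [shuffles_nil_right]
  | case3 x xs y ys ih₁ ih₂ =>
    rw [shuffles, List.length_append, List.length_map, List.length_map, ih₁, ih₂]
    simp only [List.length_cons]
    rw [show xs.length + 1 + (ys.length + 1) = xs.length + ys.length + 1 + 1 by omega,
      Nat.choose_succ_succ', add_right_comm, add_assoc]

end Shuffles

/-- The number of shuffles of a word of length `p` with a word of length `m - p` that put the
`i`-th letter of the first word at position `k` (both indices counted from `0`). -/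
def shuffleCount (m p k i : ℕ) : ℕ := k.choose i * (m - 1 - k).choose (p - 1 - i)

section Columns

variable {M : Type*} [AddCommMonoid M]

/-- The contribution of the letters of `w` to the sum of the `k`-th letters of all shuffles of `w`
with some word of length `m - w.length`. -/
def shuffleColumn (w : List M) (m k : ℕ) : M :=
  ∑ i ∈ range w.length, shuffleCount m w.length k i • w.getD i 0

theorem shuffleColumn_nil (m k : ℕ) : shuffleColumn ([] : List M) m k = 0 := by
  simp [shuffleColumn]

theorem shuffleColumn_self {w : List M} {k : ℕ} (hk : k < w.length) :
    shuffleColumn w w.length k = w.getD k 0 := by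
  rw [shuffleColumn, sum_eq_single_of_mem k (mem_range.2 hk)]
  · simp [shuffleCount]
  · intro i _ hik
    rcases lt_or_gt_of_ne hik with h | h
    · have hlt : w.length - 1 - k < w.length - 1 - i := by omega
      rw [shuffleCount, Nat.choose_eq_zero_of_lt hlt, mul_zero, zero_smul]
    · rw [shuffleCount, Nat.choose_eq_zero_of_lt h, zero_mul, zero_smul]

theorem shuffleColumn_cons_zero (x : M) (xs : List M) (m : ℕ) :
    shuffleColumn (x :: xs) (m + 1) 0 = m.choose xs.length • x := by
  rw [shuffleColumn, sum_eq_single_of_mem 0 (by simp)]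
  · simp [shuffleCount]
  · intro i _ hi
    rw [shuffleCount, Nat.choose_eq_zero_of_lt (Nat.pos_of_ne_zero hi), zero_mul, zero_smul]

theorem shuffleColumn_cons_succ (x : M) (xs : List M) (m k : ℕ) :
    shuffleColumn (x :: xs) (m + 1) (k + 1) =
      shuffleColumn xs m k + shuffleColumn (x :: xs) m k := by
  simp only [shuffleColumn, List.length_cons]
  rw [sum_range_succ', sum_range_succ' _ xs.length, ← add_assoc, ← sum_add_distrib]
  have hm : m + 1 - 1 - (k + 1) = m - 1 - k := by omega
  congr 1
  · refine sum_congr rfl fun i _ => ?_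
    have hp : xs.length + 1 - 1 - (i + 1) = xs.length - 1 - i := by omega
    simp only [shuffleCount, List.getD_cons_succ, ← add_smul, Nat.choose_succ_succ', add_mul, hm,
      hp]
  · simp only [shuffleCount, hm, List.getD_cons_zero, Nat.choose_zero_right]

theorem sum_map_getD_shuffles (a b : List M) {k : ℕ} (hk : k < a.length + b.length) :
    ((shuffles a b).map (·.getD k 0)).sum =
      shuffleColumn a (a.length + b.length) k + shuffleColumn b (a.length + b.length) k := by
  induction a, b using shuffles.induct generalizing k with
  | case1 ys => simp_all [shuffles, shuffleColumn_nil, shuffleColumn_self]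
  | case2 xs _ => simp_all [shuffles_nil_right, shuffleColumn_nil, shuffleColumn_self]
  | case3 x xs y ys ih₁ ih₂ =>
    have hm₁ : xs.length + (y :: ys).length = xs.length + ys.length + 1 := by simp; omega
    have hm₂ : (x :: xs).length + ys.length = xs.length + ys.length + 1 := by simp; omega
    have hm : (x :: xs).length + (y :: ys).length = xs.length + ys.length + 1 + 1 := by
      simp; omega
    rw [shuffles, List.map_append, List.sum_append, List.map_map, List.map_map, hm]
    rcases k with _ | k
    · simp only [Function.comp_def, List.getD_cons_zero, List.map_const', List.sum_replicate,
        length_shuffles, shuffleColumn_cons_zero, hm₂, ← hm₁]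
      rw [Nat.choose_symm_of_eq_add (a := (x :: xs).length) (b := ys.length) (by simp; omega)]
    · simp only [Function.comp_def, List.getD_cons_succ]
      rw [ih₁ (by omega), ih₂ (by omega), hm₁, hm₂, shuffleColumn_cons_succ,
        shuffleColumn_cons_succ]
      abel

end Columns

theorem choose_mul_shuffleCount {m p k i : ℕ} (hik : i ≤ k) (hip : i < p) (hpm : p ≤ m) :
    (m - 1).choose k * shuffleCount m p k i =
      (m - 1).choose i * (m - 1 - i).choose (p - 1 - i) * (m - p).choose (k - i) := by
  have h := Nat.choose_mul_choose_sub_comm (m - 1 - i) (k - i) (p - 1 - i)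
  rw [show m - 1 - i - (k - i) = m - 1 - k by omega,
    show m - 1 - i - (p - 1 - i) = m - p by omega] at h
  rw [shuffleCount, ← mul_assoc, Nat.choose_mul hik, mul_assoc, h, mul_assoc]

theorem sum_neg_one_pow_mul_choose_mul_shuffleCount {m p i : ℕ} (hip : i < p) (hpm : p < m) :
    ∑ k ∈ range m, ((-1) ^ k * ((m - 1).choose k * shuffleCount m p k i : ℕ) : ℤ) = 0 := by
  obtain ⟨N, rfl⟩ := Nat.exists_eq_add_of_le (hip.trans hpm).le
  rw [sum_range_add, sum_eq_zero fun k hk => by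
    rw [shuffleCount, Nat.choose_eq_zero_of_lt (mem_range.1 hk)]; simp, zero_add]
  have hterm : ∀ j, ((-1) ^ (i + j) *
      ((i + N - 1).choose (i + j) * shuffleCount (i + N) p (i + j) i : ℕ) : ℤ) =
        (-1) ^ i * ((i + N - 1).choose i * (i + N - 1 - i).choose (p - 1 - i) : ℕ) *
          ((-1) ^ j * (i + N - p).choose j) := by
    intro j
    rw [choose_mul_shuffleCount (Nat.le_add_right i j) hip hpm.le, Nat.add_sub_cancel_left]
    push_cast
    ring
  rw [sum_congr rfl fun j _ => hterm j, ← mul_sum,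
    Int.alternating_sum_range_choose_of_lt (by omega) (by omega), mul_zero]

section LinearPart

variable {R : Type*} [CommRing R]

def dupalLinear (w : List R) : R :=
  ∑ k ∈ range w.length, (-1) ^ k * ((w.length - 1).choose k : R) * w.getD k 0

theorem sum_neg_one_pow_mul_choose_mul_shuffleColumn {w : List R} {m : ℕ} (hw : w.length < m) :
    ∑ k ∈ range m, (-1) ^ k * ((m - 1).choose k : R) * shuffleColumn w m k = 0 := by
  simp only [shuffleColumn, nsmul_eq_mul, mul_sum]
  rw [sum_comm]
  refine sum_eq_zero fun i hi => ?_
  have h := congrArg (Int.cast : ℤ → R)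
    (sum_neg_one_pow_mul_choose_mul_shuffleCount (mem_range.1 hi) hw)
  push_cast at h
  calc ∑ k ∈ range m, (-1) ^ k * ((m - 1).choose k : R) *
        ((shuffleCount m w.length k i : R) * w.getD i 0)
      = (∑ k ∈ range m, (-1) ^ k * (((m - 1).choose k : R) * shuffleCount m w.length k i)) *
          w.getD i 0 := by
        rw [sum_mul]
        exact sum_congr rfl fun k _ => by ring
    _ = 0 := by rw [h, zero_mul]

theorem sum_map_dupalLinear_shuffles {a b : List R} (ha : a ≠ []) (hb : b ≠ []) :
    ((shuffles a b).map dupalLinear).sum = 0 := by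
  set m := a.length + b.length
  have hσ : ∀ σ ∈ shuffles a b, dupalLinear σ =
      ∑ k ∈ range m, (-1) ^ k * ((m - 1).choose k : R) * σ.getD k 0 := by
    intro σ hσ
    rw [dupalLinear, (perm_append_of_mem_shuffles hσ).length_eq, List.length_append]
  rw [List.map_congr_left hσ, List.sum_map_finset_sum]
  have hcol : ∀ k ∈ range m,
      ((shuffles a b).map fun σ => (-1) ^ k * ((m - 1).choose k : R) * σ.getD k 0).sum =
        (-1) ^ k * ((m - 1).choose k : R) * (shuffleColumn a m k + shuffleColumn b m k) := by
    intro k hk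
    rw [List.sum_map_mul_left, sum_map_getD_shuffles a b (mem_range.1 hk)]
  have ha' : 0 < a.length := List.length_pos_iff.2 ha
  have hb' : 0 < b.length := List.length_pos_iff.2 hb
  rw [sum_congr rfl hcol]
  simp only [mul_add]
  rw [sum_add_distrib, sum_neg_one_pow_mul_choose_mul_shuffleColumn (by omega),
    sum_neg_one_pow_mul_choose_mul_shuffleColumn (by omega), add_zero]

end LinearPart

theorem stmt1_general {K : Type*} [Field K] (a b : List K) (ha : a ≠ []) (hb : b ≠ []) :
    shSum (dupal : List K → K) a b = 0 := by
  have hσ : ∀ σ ∈ shuffles a b, dupal σ =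
      ((bernoulli (a ++ b).length / ((a ++ b).length.factorial : ℚ) : ℚ) : K) *
        ((a ++ b).prod)⁻¹ * dupalLinear σ := by
    intro σ hσ
    have hperm := perm_append_of_mem_shuffles hσ
    rw [dupal, dupalLinear, hperm.length_eq, hperm.prod_eq]
  rw [shSum, List.map_congr_left hσ, List.sum_map_mul_left, sum_map_dupalLinear_shuffles ha hb,
    mul_zero]

/-- `dupal` is alternal. -/
theorem stmt1 {K : Type*} [Field K] [CharZero K] (a b : List K) (ha : a ≠ []) (hb : b ≠ []) :
    shSum (dupal : List K → K) a b = 0 :=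
  stmt1_general a b ha hb
end

section
/- For the mould paj with paj^m(x_1,...,x_m) = 1/(x_1(x_1+x_2)···(x_1+...+x_m)) and mupaj with mupaj^m(x_1,...,x_m) = (−1)^m/(x_m(x_m+x_{m−1})···(x_m+...+x_1)), mupaj is the inverse of paj in the mould algebra: paj × mupaj = mupaj × paj = 1, where (M × N)^m = Σ_{k=0}^m M^k(x_1,...,x_k)N^{m−k}(x_{k+1},...,x_m). -/
open scoped BigOperators

variable {K : Type*} [Field K]

/-- The field `ℚ(x_0, x_1, x_2, …)` of rational functions, in which all the Laurent-series
identities among the moulds considered here take place. -/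
noncomputable abbrev KK : Type := FractionRing (MvPolynomial ℕ ℚ)

/-- The formal variables `x_i`, viewed inside `KK`. -/
noncomputable def Xv (i : ℕ) : KK :=
  algebraMap (MvPolynomial ℕ ℚ) KK (MvPolynomial.X i)

/-- The mould `paj`: `paj^m(x_1,…,x_m) = 1/(x_1(x_1+x_2)⋯(x_1+⋯+x_m))`, `paj^0 = 1`. -/
noncomputable def paj {K : Type*} [Field K] (l : List K) : K :=
  (∏ k ∈ Finset.range l.length, (l.take (k + 1)).sum)⁻¹

/-- The mould `mupaj`: `mupaj^m(x_1,…,x_m) = (−1)^m/(x_m(x_m+x_{m−1})⋯(x_m+⋯+x_1))`. -/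
noncomputable def mupaj {K : Type*} [Field K] (l : List K) : K :=
  (-1 : K) ^ l.length * (∏ k ∈ Finset.range l.length, (l.drop k).sum)⁻¹

/-! Multiplying the `k`-th term of `(paj × mupaj)(w)` by `w.sum = S_k + T_k`, where `S_k` and `T_k`
are the sums of the first `k` and of the remaining letters, splits it in two: `S_k` cancels the last
factor of `paj`, `T_k` the first factor of `mupaj`, and the piece of the `(k+1)`-st term coming
from `S_{k+1}` is minus the piece of the `k`-th term coming from `T_k`. So the sum telescopes to `0`.

The identity `mupaj × paj = 1` then follows formally: if `A × B = 1` and `A [] = 1`, then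
`A × (B × A) = A`, and cancelling `A` on the left, by induction on the length, gives `B × A = 1`.
Since these identities only hold where all block sums `x_i + ⋯ + x_j` are nonzero, the argument is
run on the infixes of a fixed word. -/

theorem one_eq_zero_of_ne_nil {w : List K} (hw : w ≠ []) : one w = 0 := by
  cases w with
  | nil => exact absurd rfl hw
  | cons a t => rfl

theorem mmul_one_right (M : List K → K) (w : List K) : mmul M one w = M w := by
  rw [mmul, Finset.sum_eq_single_of_mem w.length (Finset.self_mem_range_succ _)]
  · simp [one]
  · intro k hk hne
    rw [one_eq_zero_of_ne_nil, mul_zero]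
    rw [Finset.mem_range] at hk
    rw [ne_eq, List.drop_eq_nil_iff]
    omega

theorem mmul_one_left (M : List K → K) (w : List K) : mmul one M w = M w := by
  rw [mmul, Finset.sum_eq_single_of_mem 0 (by simp)]
  · simp [one]
  · intro k hk hne
    rw [one_eq_zero_of_ne_nil, zero_mul]
    rw [Finset.mem_range] at hk
    rw [ne_eq, List.take_eq_nil_iff]
    rintro (h | rfl)
    · exact hne h
    · rw [List.length_nil] at hk
      omega

theorem mmul_assoc (A B C : List K → K) (w : List K) :
    mmul (mmul A B) C w = mmul A (mmul B C) w := by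
  have hL : ∀ k ∈ Finset.range (w.length + 1), mmul A B (w.take k) * C (w.drop k) =
      ∑ j ∈ Finset.range (k + 1), A (w.take j) * B ((w.drop j).take (k - j)) * C (w.drop k) := by
    intro k hk
    rw [Finset.mem_range] at hk
    rw [mmul, Finset.sum_mul, List.length_take, min_eq_left (by omega)]
    refine Finset.sum_congr rfl fun j hj => ?_
    rw [Finset.mem_range] at hj
    rw [List.take_take, min_eq_left (by omega), List.drop_take]
  have hR : ∀ j ∈ Finset.range (w.length + 1), A (w.take j) * mmul B C (w.drop j) =
      ∑ k ∈ Finset.Ico j (w.length + 1),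
        A (w.take j) * B ((w.drop j).take (k - j)) * C (w.drop k) := by
    intro j hj
    rw [Finset.mem_range] at hj
    rw [mmul, Finset.mul_sum, List.length_drop, Finset.sum_Ico_eq_sum_range,
      show w.length + 1 - j = w.length - j + 1 by omega]
    refine Finset.sum_congr rfl fun i _ => ?_
    rw [List.drop_drop, Nat.add_sub_cancel_left, mul_assoc]
  rw [mmul, mmul, Finset.sum_congr rfl hL, Finset.sum_congr rfl hR, ← Nat.Ico_zero_eq_range,
    Finset.sum_Ico_Ico_comm]
  simp only [Finset.range_eq_Ico]

theorem eq_one_of_mmul_eq_self {M X : List K → K} (hM : M [] = 1) {w : List K}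
    (h : ∀ k, mmul M X (w.drop k) = M (w.drop k)) : X w = one w := by
  have ih : ∀ k ∈ Finset.range w.length, X (w.drop (k + 1)) = one (w.drop (k + 1)) :=
    fun k hk => eq_one_of_mmul_eq_self hM fun j => by rw [List.drop_drop]; exact h _
  have key : mmul M X w = mmul M one w := by rw [mmul_one_right]; simpa using h 0
  rw [mmul, mmul, Finset.sum_range_succ', Finset.sum_range_succ',
    Finset.sum_congr rfl fun k hk => by rw [ih k hk]] at key
  simpa [hM] using key
termination_by w.length
decreasing_by simp only [List.length_drop]; simp only [Finset.mem_range] at hk; omega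

theorem mmul_eq_one_of_mmul_eq_one {A B : List K → K} (hA : A [] = 1) {w : List K}
    (h : ∀ u, u <:+: w → mmul A B u = one u) : mmul B A w = one w :=
  eq_one_of_mmul_eq_self hA fun k => by
    have hv : w.drop k <:+: w := (List.drop_suffix k w).isInfix
    calc mmul A (mmul B A) (w.drop k) = mmul (mmul A B) A (w.drop k) := (mmul_assoc _ _ _ _).symm
      _ = mmul one A (w.drop k) := Finset.sum_congr rfl fun j _ => by
        rw [h _ ((List.take_prefix j _).isInfix.trans hv)]
      _ = A (w.drop k) := mmul_one_left _ _

def HasNonzeroBlockSums (w : List K) : Prop :=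
  ∀ u, u <:+: w → u ≠ [] → u.sum ≠ 0

theorem HasNonzeroBlockSums.of_infix {u w : List K} (h : HasNonzeroBlockSums w) (hu : u <:+: w) :
    HasNonzeroBlockSums u :=
  fun v hv => h v (hv.trans hu)

theorem paj_nil : paj ([] : List K) = 1 := by simp [paj]

theorem paj_concat (l : List K) (a : K) : paj (l ++ [a]) = paj l * ((l ++ [a]).sum)⁻¹ := by
  rw [paj, paj, List.length_append, List.length_singleton, Finset.prod_range_succ, mul_inv,
    List.take_of_length_le (by simp)]
  congr 2
  refine Finset.prod_congr rfl fun k hk => ?_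
  rw [List.take_append_of_le_length (by rw [Finset.mem_range] at hk; omega)]

theorem mupaj_cons (a : K) (l : List K) : mupaj (a :: l) = -(mupaj l * ((a :: l).sum)⁻¹) := by
  simp only [mupaj, List.length_cons, Finset.prod_range_succ', List.drop_succ_cons,
    List.drop_zero, pow_succ, mul_inv]
  ring

theorem mmul_paj_mupaj {w : List K} (h : HasNonzeroBlockSums w) : mmul paj mupaj w = one w := by
  rcases eq_or_ne w [] with rfl | hw
  · simp [mmul, paj, mupaj, one]
  set b : ℕ → K := fun k => paj (w.take k) * mupaj (w.drop (k + 1))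
  have hS : ∀ k < w.length,
      paj (w.take (k + 1)) * mupaj (w.drop (k + 1)) * (w.take (k + 1)).sum = b k := by
    intro k hk
    have hne := h _ (List.take_prefix (k + 1) w).isInfix (by simp [List.take_eq_nil_iff, hw])
    rw [← List.take_append_getElem hk] at hne ⊢
    rw [paj_concat]
    simp only [b]
    field_simp
  have hT : ∀ k < w.length, paj (w.take k) * mupaj (w.drop k) * (w.drop k).sum = -b k := by
    intro k hk
    have hne := h _ (List.drop_suffix k w).isInfix (by rw [ne_eq, List.drop_eq_nil_iff]; omega)
    rw [List.drop_eq_getElem_cons hk] at hne ⊢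
    rw [mupaj_cons]
    simp only [b]
    field_simp
  have hsum : mmul paj mupaj w * w.sum = 0 :=
    calc mmul paj mupaj w * w.sum
        = ∑ k ∈ Finset.range (w.length + 1),
            paj (w.take k) * mupaj (w.drop k) * (w.take k).sum +
          ∑ k ∈ Finset.range (w.length + 1),
            paj (w.take k) * mupaj (w.drop k) * (w.drop k).sum := by
          rw [mmul, Finset.sum_mul, ← Finset.sum_add_distrib]
          refine Finset.sum_congr rfl fun k _ => ?_
          rw [← mul_add, List.sum_take_add_sum_drop]
      _ = ∑ k ∈ Finset.range w.length, b k + ∑ k ∈ Finset.range w.length, -b k := by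
          rw [Finset.sum_range_succ', Finset.sum_range_succ,
            Finset.sum_congr rfl fun k hk => hS k (Finset.mem_range.1 hk),
            Finset.sum_congr rfl fun k hk => hT k (Finset.mem_range.1 hk)]
          simp
      _ = 0 := by simp
  rw [one_eq_zero_of_ne_nil hw]
  exact (mul_eq_zero.1 hsum).resolve_right (h w List.infix_rfl hw)

theorem sum_map_Xv_ne_zero {v : List ℕ} (hv : v ≠ []) : (v.map Xv).sum ≠ 0 := by
  have hsum : (v.map Xv).sum = algebraMap (MvPolynomial ℕ ℚ) KK (v.map MvPolynomial.X).sum := by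
    rw [map_list_sum, List.map_map]
    rfl
  rw [hsum, ne_eq, map_eq_zero_iff _ (IsFractionRing.injective _ _)]
  intro h0
  have hlen := congrArg (MvPolynomial.eval fun _ => (1 : ℚ)) h0
  exact hv (by simpa [map_list_sum, Function.comp_def] using hlen)

theorem hasNonzeroBlockSums_map_Xv (l : List ℕ) : HasNonzeroBlockSums (l.map Xv) := by
  intro u hu hne
  obtain ⟨v, -, rfl⟩ := List.infix_map_iff.1 hu
  exact sum_map_Xv_ne_zero (by rintro rfl; exact hne rfl)

/-- `mupaj` is the ×-inverse of `paj`: `paj × mupaj = mupaj × paj = 1`,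
as an identity of moulds in the formal variables `x_0, x_1, …`. -/
theorem stmt15 (m : ℕ) :
    mmul paj mupaj ((List.range m).map Xv) = one ((List.range m).map Xv) ∧
      mmul mupaj paj ((List.range m).map Xv) = one ((List.range m).map Xv) :=
  have h := hasNonzeroBlockSums_map_Xv (List.range m)
  ⟨mmul_paj_mupaj h, mmul_eq_one_of_mmul_eq_one paj_nil fun _ hu => mmul_paj_mupaj (h.of_infix hu)⟩
end
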